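/- Hennessy–Milner theorem for LEA: if M and M' are image-finite models, s a world of M and s' a world of M', then (M,s) and (M',s') satisfy the same LEA-formulas if and only if (M,s) and (M',s') are ∘-bisimilar. -/

import Mathlib

/-! A ∘-bisimulation preserves every formula by induction on formulas. Conversely, on an
image-finite model LEA-equivalence is itself a ∘-bisimulation: if `s ≡ s'`, `s R t` and
`s ≢ t`, but no successor of `s'` is equivalent to `t`, pick `δ` true at `s` and false at `t`,
and `χ` true at `t` and false at all (finitely many) successors of `s'`. Then `∘(δ ∨ ¬χ)`
holds at `s'` but fails at `s`. -/

/-- The language LEA of essence and accident. -/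
inductive LEAForm : Type
  | atom : ℕ → LEAForm
  | neg : LEAForm → LEAForm
  | and : LEAForm → LEAForm → LEAForm
  | ess : LEAForm → LEAForm

/-- A Kripke model (the frame is (W, R)). -/
structure Model (W : Type) where
  R : W → W → Prop
  V : ℕ → W → Prop

/-- Satisfaction for LEA. -/
def satLEA {W : Type} (M : Model W) : W → LEAForm → Prop
  | w, .atom p => M.V p w
  | w, .neg φ => ¬ satLEA M w φ
  | w, .and φ ψ => satLEA M w φ ∧ satLEA M w ψ
  | w, .ess φ => satLEA M w φ → ∀ v, M.R w v → satLEA M v φ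

def isCircBisim {W : Type} (M : Model W) (Z : W → W → Prop) : Prop :=
  (∃ a b, Z a b) ∧
  ∀ s s', Z s s' →
    ((∀ p, M.V p s ↔ M.V p s') ∧
     (∀ t, M.R s t → ¬ Z s t → ∃ t', M.R s' t' ∧ Z t t') ∧
     (∀ t', M.R s' t' → ¬ Z s' t' → ∃ t, M.R s t ∧ Z t t'))

/-- The disjoint union of two models. -/
def dsum {W W' : Type} (M : Model W) (M' : Model W') : Model (W ⊕ W') where
  R x y :=
    match x, y with
    | Sum.inl a, Sum.inl b => M.R a b
    | Sum.inr a, Sum.inr b => M'.R a b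
    | _, _ => False
  V p x :=
    match x with
    | Sum.inl a => M.V p a
    | Sum.inr a => M'.V p a

/-- (M,s) and (M',s') are ∘-bisimilar: some ∘-bisimulation on the disjoint
union of M and M' relates s to s'. -/
def circBisimilar {W W' : Type} (M : Model W) (s : W) (M' : Model W') (s' : W') : Prop :=
  ∃ Z, isCircBisim (dsum M M') Z ∧ Z (Sum.inl s) (Sum.inr s')

namespace LEAForm

def top : LEAForm := neg (and (atom 0) (neg (atom 0)))

def or (φ ψ : LEAForm) : LEAForm := neg (and (neg φ) (neg ψ))

end LEAForm

section Semantics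

variable {W W' : Type}

@[simp]
theorem satLEA_top (N : Model W) (w : W) : satLEA N w .top := by
  simp [LEAForm.top, satLEA]

@[simp]
theorem satLEA_or (N : Model W) (w : W) (φ ψ : LEAForm) :
    satLEA N w (φ.or ψ) ↔ satLEA N w φ ∨ satLEA N w ψ := by
  simp only [LEAForm.or, satLEA]
  tauto

@[simp]
theorem dsum_R_inl_inl (M : Model W) (M' : Model W') (a b : W) :
    (dsum M M').R (.inl a) (.inl b) ↔ M.R a b := Iff.rfl

@[simp]
theorem dsum_R_inr_inr (M : Model W) (M' : Model W') (a b : W') :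
    (dsum M M').R (.inr a) (.inr b) ↔ M'.R a b := Iff.rfl

@[simp]
theorem dsum_R_inl_inr (M : Model W) (M' : Model W') (a : W) (b : W') :
    ¬ (dsum M M').R (.inl a) (.inr b) := id

@[simp]
theorem dsum_R_inr_inl (M : Model W) (M' : Model W') (a : W') (b : W) :
    ¬ (dsum M M').R (.inr a) (.inl b) := id

theorem satLEA_dsum_inl (M : Model W) (M' : Model W') (φ : LEAForm) (w : W) :
    satLEA (dsum M M') (.inl w) φ ↔ satLEA M w φ := by
  induction φ generalizing w with
  | atom p => rfl
  | neg φ ih => exact not_congr (ih w)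
  | and φ ψ ih₁ ih₂ => exact and_congr (ih₁ w) (ih₂ w)
  | ess φ ih => simp [satLEA, ih, Sum.forall]

theorem satLEA_dsum_inr (M : Model W) (M' : Model W') (φ : LEAForm) (w : W') :
    satLEA (dsum M M') (.inr w) φ ↔ satLEA M' w φ := by
  induction φ generalizing w with
  | atom p => rfl
  | neg φ ih => exact not_congr (ih w)
  | and φ ψ ih₁ ih₂ => exact and_congr (ih₁ w) (ih₂ w)
  | ess φ ih => simp [satLEA, ih, Sum.forall]

def Model.ImageFinite (N : Model W) : Prop :=
  ∀ w, {v | N.R w v}.Finite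

theorem Model.ImageFinite.dsum {M : Model W} {M' : Model W'} (hM : M.ImageFinite)
    (hM' : M'.ImageFinite) : (dsum M M').ImageFinite := by
  rintro (w | w)
  · refine ((hM w).image Sum.inl).subset ?_
    rintro (v | v) hv
    exacts [⟨v, hv, rfl⟩, hv.elim]
  · refine ((hM' w).image Sum.inr).subset ?_
    rintro (v | v) hv
    exacts [hv.elim, ⟨v, hv, rfl⟩]

theorem satLEA_iff_of_isCircBisim {N : Model W} {Z : W → W → Prop} (hZ : isCircBisim N Z)
    (φ : LEAForm) {x y : W} (hxy : Z x y) : satLEA N x φ ↔ satLEA N y φ := by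
  induction φ generalizing x y with
  | atom p => exact (hZ.2 x y hxy).1 p
  | neg φ ih => exact not_congr (ih hxy)
  | and φ ψ ih₁ ih₂ => exact and_congr (ih₁ hxy) (ih₂ hxy)
  | ess φ ih =>
    obtain ⟨-, forth, back⟩ := hZ.2 x y hxy
    constructor
    · intro hx hy t' hyt'
      by_cases hZyt' : Z y t'
      · exact (ih hZyt').1 hy
      · obtain ⟨t, hxt, hZtt'⟩ := back t' hyt' hZyt'
        exact (ih hZtt').1 (hx ((ih hxy).2 hy) t hxt)
    · intro hy hx t hxt
      by_cases hZxt : Z x t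
      · exact (ih hZxt).1 hx
      · obtain ⟨t', hyt', hZtt'⟩ := forth t hxt hZxt
        exact (ih hZtt').2 (hy ((ih hxy).1 hx) t' hyt')

def leaEquiv (N : Model W) (x y : W) : Prop :=
  ∀ φ, satLEA N x φ ↔ satLEA N y φ

theorem leaEquiv.symm {N : Model W} {x y : W} (h : leaEquiv N x y) : leaEquiv N y x :=
  fun φ => (h φ).symm

theorem exists_satLEA_not_satLEA_of_not_leaEquiv {N : Model W} {x y : W}
    (h : ¬ leaEquiv N x y) : ∃ φ, satLEA N x φ ∧ ¬ satLEA N y φ := by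
  obtain ⟨φ, hφ⟩ := not_forall.1 h
  by_cases hx : satLEA N x φ
  · exact ⟨φ, hx, fun hy => hφ (iff_of_true hx hy)⟩
  · exact ⟨.neg φ, hx, fun hy => hφ (iff_of_false hx hy)⟩

theorem exists_satLEA_forall_not_satLEA {N : Model W} {t : W} {S : Set W} (hS : S.Finite)
    (h : ∀ u ∈ S, ∃ φ, satLEA N t φ ∧ ¬ satLEA N u φ) :
    ∃ χ, satLEA N t χ ∧ ∀ u ∈ S, ¬ satLEA N u χ := by
  induction S, hS using Set.Finite.induction_on with
  | empty => exact ⟨.top, satLEA_top N t, by simp⟩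
  | @insert a S _ _ ih =>
    obtain ⟨φ, htφ, haφ⟩ := h a (Set.mem_insert a S)
    obtain ⟨χ, htχ, hSχ⟩ := ih fun u hu => h u (Set.mem_insert_of_mem a hu)
    exact ⟨.and φ χ, ⟨htφ, htχ⟩,
      Set.forall_mem_insert.2 ⟨fun h => haφ h.1, fun u hu h => hSχ u hu h.2⟩⟩

theorem Model.ImageFinite.exists_leaEquiv_of_rel {N : Model W} (hN : N.ImageFinite)
    {s s' t : W} (hss' : leaEquiv N s s') (hst : N.R s t) (hnst : ¬ leaEquiv N s t) :
    ∃ t', N.R s' t' ∧ leaEquiv N t t' := by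
  by_contra! hno
  obtain ⟨δ, hsδ, htδ⟩ := exists_satLEA_not_satLEA_of_not_leaEquiv hnst
  obtain ⟨χ, htχ, hs'χ⟩ := exists_satLEA_forall_not_satLEA (hN s') fun t' hs't' =>
    exists_satLEA_not_satLEA_of_not_leaEquiv (hno t' hs't')
  have hs' : satLEA N s' (.ess (δ.or (.neg χ))) := fun _ t' hs't' =>
    (satLEA_or N t' _ _).2 (.inr (hs'χ t' hs't'))
  have hs : ¬ satLEA N s (.ess (δ.or (.neg χ))) := fun h =>
    ((satLEA_or N t _ _).1 (h ((satLEA_or N s _ _).2 (.inl hsδ)) t hst)).elim htδ (· htχ)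
  exact hs ((hss' _).2 hs')

theorem Model.ImageFinite.isCircBisim_leaEquiv [Nonempty W] {N : Model W}
    (hN : N.ImageFinite) : isCircBisim N (leaEquiv N) := by
  refine ⟨⟨Classical.arbitrary W, _, fun _ => Iff.rfl⟩, fun x y hxy =>
    ⟨fun p => hxy (.atom p), fun t hxt hnxt => hN.exists_leaEquiv_of_rel hxy hxt hnxt,
      fun t' hyt' hnyt' => ?_⟩⟩
  obtain ⟨t, hyt, htt'⟩ := hN.exists_leaEquiv_of_rel hxy.symm hyt' hnyt'
  exact ⟨t, hyt, htt'.symm⟩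

theorem leaEquiv_dsum_inl_inr (M : Model W) (M' : Model W') (s : W) (s' : W') :
    leaEquiv (dsum M M') (.inl s) (.inr s') ↔ ∀ φ, satLEA M s φ ↔ satLEA M' s' φ := by
  simp only [leaEquiv, satLEA_dsum_inl, satLEA_dsum_inr]

end Semantics

theorem stmt13 (W W' : Type)
    (M : Model W) (M' : Model W')
    (hM : ∀ w : W, {v | M.R w v}.Finite) (hM' : ∀ w : W', {v | M'.R w v}.Finite)
    (s : W) (s' : W') :
    (∀ φ : LEAForm, satLEA M s φ ↔ satLEA M' s' φ) ↔ circBisimilar M s M' s' := by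
  have : Nonempty (W ⊕ W') := ⟨.inl s⟩
  constructor
  · intro hequiv
    exact ⟨leaEquiv (dsum M M'), (Model.ImageFinite.dsum hM hM').isCircBisim_leaEquiv,
      (leaEquiv_dsum_inl_inr M M' s s').2 hequiv⟩
  · rintro ⟨Z, hZ, hss'⟩
    exact (leaEquiv_dsum_inl_inr M M' s s').1 fun φ => satLEA_iff_of_isCircBisim hZ φ hss'
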